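/- Let P be the infinite ℕ×ℕ matrix with P(0,1)=1, P(n,n)=n for n≥1, P(n,n+1)=1 for n≥1, all other entries 0. Then for each n, uᵀ P^n e = B_n, the n-th Bell number, where u=(1,0,0,...)ᵀ and e is the all-ones vector (the sum uᵀ P^n e is finite since uᵀ P^n has finitely many nonzero entries). -/

import Mathlib

/-!
Multiplying a row vector by `P` realises the recurrence `S(n+1, k) = k S(n, k) + S(n, k-1)` of the
Stirling numbers of the second kind, so `uᵀ Pⁿ` is the row `(S(n, k))ₖ` and its entry sum counts all
partitions of an `n`-set. The Bell recurrence for that sum comes from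
`S(n+1, k+1) = Σⱼ C(n, j) S(j, k)`: remove the block containing the new element, which leaves
`j` of the other `n` elements to be split into `k` blocks.
-/

/-- The Bell numbers, via the recurrence `B_{n+1} = Σ_{k=0}^n C(n,k) B_k`
(the number of set partitions of an `n`-element set). -/
def bell : ℕ → ℕ
  | 0 => 1
  | n + 1 => ∑ k : Fin (n + 1), Nat.choose n k * bell k

open Finset Nat

theorem stirlingSecond_succ_succ_eq_sum_choose (n k : ℕ) :
    stirlingSecond (n + 1) (k + 1) = ∑ j ∈ range (n + 1), n.choose j * stirlingSecond j k := by
  induction n generalizing k with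
  | zero => simp [stirlingSecond_succ_succ]
  | succ n ih =>
    cases k with
    | zero => simp [stirlingSecond_one_right, sum_range_succ']
    | succ m =>
      have pascal := sum_choose_succ_mul (R := ℕ) (fun j _ => stirlingSecond j (m + 1)) n
      simp only [Nat.cast_id] at pascal
      rw [pascal, stirlingSecond_succ_succ, ih, ih]
      simp only [stirlingSecond_succ_succ, mul_add, sum_add_distrib, mul_left_comm _ (m + 1),
        ← mul_sum]
      ring

theorem sum_range_stirlingSecond_of_le {n N : ℕ} (h : n ≤ N) :
    ∑ k ∈ range (N + 1), stirlingSecond n k = ∑ k ∈ range (n + 1), stirlingSecond n k :=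
  (sum_subset (range_subset_range.mpr (by omega)) fun _ _ hk =>
    stirlingSecond_eq_zero_of_lt (by simpa using hk)).symm

theorem bell_succ_eq_sum_choose (n : ℕ) :
    bell (n + 1) = ∑ j ∈ range (n + 1), n.choose j * bell j := by
  rw [bell, Fin.sum_univ_eq_sum_range (fun j => n.choose j * bell j)]

theorem sum_stirlingSecond_eq_bell (n : ℕ) :
    ∑ k ∈ range (n + 1), stirlingSecond n k = bell n := by
  induction n using Nat.strong_induction_on with
  | _ n ih =>
    cases n with
    | zero => simp [bell]
    | succ n =>
      rw [sum_range_succ', bell_succ_eq_sum_choose]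
      simp only [stirlingSecond_succ_succ_eq_sum_choose, stirlingSecond_succ_zero, add_zero]
      rw [sum_comm]
      refine sum_congr rfl fun j hj => ?_
      have hjn : j ≤ n := Nat.lt_succ_iff.mp (mem_range.mp hj)
      rw [← mul_sum, sum_range_stirlingSecond_of_le hjn, ih j (by omega)]

def bellProductionMatrix (R : Type*) [Semiring R] (i j : ℕ) : R :=
  if j = i + 1 then 1 else if j = i then (i : R) else 0

theorem sum_stirlingSecond_mul_bellProductionMatrix {R : Type*} [CommSemiring R] (n k : ℕ) :
    ∑ i ∈ range (n + 1), (stirlingSecond n i : R) * bellProductionMatrix R i k =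
      stirlingSecond (n + 1) k := by
  cases k with
  | zero =>
    refine (sum_eq_zero fun i _ => ?_).trans (by simp)
    rcases i with _ | i <;> simp [bellProductionMatrix]
  | succ m =>
    rw [sum_eq_add m (m + 1) (by omega)]
    · simp only [bellProductionMatrix, ↓reduceIte, mul_one,
        Nat.left_eq_add, one_ne_zero, cast_add, cast_one, stirlingSecond_succ_succ, cast_mul]
      ring
    · intro i _ hi
      simp [bellProductionMatrix, hi.1.symm, hi.2.symm]
    all_goals
      intro h
      rw [stirlingSecond_eq_zero_of_lt (by simpa using h), Nat.cast_zero, zero_mul]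

/-- For the Bell production matrix `P` (with `P(0,1)=1`, `P(n,n)=n` and `P(n,n+1)=1`
for `n ≥ 1`), the sequence `uᵀ P^n e` is the sequence of Bell numbers. Here
`row n = uᵀ P^n` (supported on the first `n+1` coordinates, since `P` is bidiagonal),
and `uᵀ P^n e` is the finite sum of its entries. -/
theorem stmt10 (P : ℕ → ℕ → ℚ)
    (hP : ∀ i j, P i j = if j = i + 1 then 1 else if j = i then (i : ℚ) else 0)
    (row : ℕ → ℕ → ℚ)
    (hrow0 : ∀ k, row 0 k = if k = 0 then 1 else 0)
    (hrow : ∀ n k, row (n + 1) k = ∑ i ∈ Finset.range (n + 1), row n i * P i k) :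
    ∀ n, ∑ k ∈ Finset.range (n + 1), row n k = (bell n : ℚ) := by
  obtain rfl : P = bellProductionMatrix ℚ := funext₂ hP
  have row_eq : ∀ n k, row n k = stirlingSecond n k := by
    intro n
    induction n with
    | zero => intro k; cases k <;> simp [hrow0]
    | succ n ih =>
      intro k
      simp only [hrow, ih, sum_stirlingSecond_mul_bellProductionMatrix]
  intro n
  simp only [row_eq]
  exact_mod_cast sum_stirlingSecond_eq_bell n
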